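/- arXiv:0804.3313 — 2 statements merged into one kernel-verified Lean document; each statement's English description precedes it below -/
import Mathlib

section
/- Let X be a Banach space, q ∈ [2,∞), and let (S,Σ,μ) be a σ-finite measure space which contains, for every N ∈ ℤ_+, N pairwise disjoint measurable sets of equal finite positive measure. If there exists a constant C ≥ 0 such that for every N ≥ 1, all f_1,…,f_N ∈ L^{q,1}(S) and all x_1,…,x_N ∈ X one has ( ∫_S ( E‖Σ_{n=1}^N r_n f_n(s) x_n‖_X² )^{q/2} dμ(s) )^{1/q} ≤ C · ( ∫_0^∞ max_{1≤n≤N} μ(|f_n|>t)^{1/q} dt ) · ( E‖Σ_{n=1}^N r_n x_n‖_X² )^{1/2}, then X has cotype q. -/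
open MeasureTheory ENNReal

noncomputable section

/-- The Rademacher average `𝔼 ‖∑ₙ rₙ xₙ‖²`, realized concretely as the average over all
sign choices `ε : Fin N → Bool`.  For a Rademacher sequence `(rₙ)` on any probability space
this equals `𝔼 ‖∑ₙ rₙ xₙ‖²`. -/
def radAvg {E : Type*} [NormedAddCommGroup E] [NormedSpace ℝ E] {N : ℕ} (x : Fin N → E) : ℝ :=
  (∑ ε : Fin N → Bool, ‖∑ n, (if ε n then (1 : ℝ) else -1) • x n‖ ^ 2) / 2 ^ N

/-- `X` has (Rademacher) type `p`:
`(𝔼 ‖∑ rₙ xₙ‖²)^(1/2) ≤ C (∑ ‖xₙ‖^p)^(1/p)`. -/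
def HasRademacherType (X : Type*) [NormedAddCommGroup X] [NormedSpace ℝ X] (p : ℝ) : Prop :=
  ∃ C : ℝ, 0 ≤ C ∧ ∀ (N : ℕ) (x : Fin N → X),
    Real.sqrt (radAvg x) ≤ C * (∑ n, ‖x n‖ ^ p) ^ (1 / p)

/-- `X` has (Rademacher) cotype `q ∈ [2,∞]`:
`(∑ ‖xₙ‖^q)^(1/q) ≤ C (𝔼 ‖∑ rₙ xₙ‖²)^(1/2)` (with `max ‖xₙ‖` on the left if `q = ∞`). -/
def HasRademacherCotype (X : Type*) [NormedAddCommGroup X] [NormedSpace ℝ X] (q : ℝ≥0∞) : Prop :=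
  ∃ C : ℝ, 0 ≤ C ∧ ∀ (N : ℕ) (x : Fin N → X),
    (if q = ∞ then ⨆ n, ‖x n‖ else (∑ n, ‖x n‖ ^ q.toReal) ^ (1 / q.toReal))
      ≤ C * Real.sqrt (radAvg x)

lemma radAvg_single {X : Type*} [NormedAddCommGroup X] [NormedSpace ℝ X] {N : ℕ}
    (y : Fin N → X) (m : Fin N) (hy : ∀ n, n ≠ m → y n = 0) : radAvg y = ‖y m‖ ^ 2 := by
  unfold radAvg
  have h : ∀ ε : Fin N → Bool, ‖∑ n, (if ε n then (1:ℝ) else -1) • y n‖ ^ 2 = ‖y m‖ ^ 2 := by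
    intro ε
    rw [Finset.sum_eq_single m (fun n _ hn => by rw [hy n hn, smul_zero]) (by simp)]
    cases hεm : ε m <;> simp [norm_smul]
  simp only [h, Finset.sum_const, Finset.card_univ, Fintype.card_fun, Fintype.card_fin,
    Fintype.card_bool, nsmul_eq_mul]
  field_simp
  push_cast; ring

lemma radAvg_zero {X : Type*} [NormedAddCommGroup X] [NormedSpace ℝ X] {N : ℕ} :
    radAvg (fun _ : Fin N => (0 : X)) = 0 := by simp [radAvg]


/-- Lemma 3.1(3): if the estimate of Lemma 3.1(1) holds on a measure space containing
`N` disjoint sets of equal finite positive measure for every `N`, then `X` has cotype `q`. -/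
theorem statement2 {X : Type*} [NormedAddCommGroup X] [NormedSpace ℝ X] [CompleteSpace X]
    {S : Type*} [MeasurableSpace S] (μ : Measure S) [SigmaFinite μ]
    (q : ℝ) (hq : 2 ≤ q)
    (hS : ∀ N : ℕ, 0 < N → ∃ A : Fin N → Set S, (∀ n, MeasurableSet (A n)) ∧
      (Pairwise fun i j => Disjoint (A i) (A j)) ∧
      ∃ c : ℝ≥0∞, 0 < c ∧ c < ∞ ∧ ∀ n, μ (A n) = c)
    (C : ℝ) (hC : 0 ≤ C)
    (hineq : ∀ (N : ℕ) (f : Fin N → S → ℝ) (x : Fin N → X),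
      (∀ n, Measurable (f n) ∧
        ∫⁻ t in Set.Ioi (0 : ℝ), μ {s | t < |f n s|} ^ (1 / q) < ∞) →
      eLpNorm (fun s => Real.sqrt (radAvg fun n => f n s • x n)) (ENNReal.ofReal q) μ ≤
        ENNReal.ofReal C *
          (∫⁻ t in Set.Ioi (0 : ℝ), ⨆ n, μ {s | t < |f n s|} ^ (1 / q)) *
          ENNReal.ofReal (Real.sqrt (radAvg x))) :
    HasRademacherCotype X (ENNReal.ofReal q) := by
  have hq0 : (0:ℝ) < q := lt_of_lt_of_le two_pos hq
  have hq' : (0:ℝ) < 1/q := by positivity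
  refine ⟨C, hC, ?_⟩
  intro N x
  rw [if_neg ENNReal.ofReal_ne_top, ENNReal.toReal_ofReal hq0.le]
  rcases Nat.eq_zero_or_pos N with hN | hN
  · subst hN
    simp only [Finset.univ_eq_empty, Finset.sum_empty]
    rw [Real.zero_rpow hq'.ne']
    exact mul_nonneg hC (Real.sqrt_nonneg _)
  obtain ⟨A, hAmeas, hAdisj, c, hc0, hcT, hAc⟩ := hS N hN
  haveI : Nonempty (Fin N) := Fin.pos_iff_nonempty.mp hN
  set f : Fin N → S → ℝ := fun n => (A n).indicator (fun _ => 1) with hf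
  -- level sets
  have hset : ∀ (n : Fin N) (t : ℝ), 0 < t →
      {s | t < |f n s|} = if t < 1 then A n else ∅ := by
    intro n t ht
    ext s
    simp only [Set.mem_setOf_eq]
    by_cases hs : s ∈ A n
    · rw [hf]; simp only [Set.indicator_of_mem hs, abs_one]
      split_ifs with h1 <;> simp [h1, hs]
    · rw [hf]; simp only [Set.indicator_of_notMem hs, abs_zero]
      split_ifs <;> simp [hs, not_lt.mpr ht.le]
  have hmeaslev : ∀ (n : Fin N) (t : ℝ), 0 < t →
      μ {s | t < |f n s|} ^ (1/q) = (Set.Ioo (0:ℝ) 1).indicator (fun _ => c ^ (1/q)) t := by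
    intro n t ht
    rw [hset n t ht]
    by_cases h1 : t < 1
    · rw [if_pos h1, Set.indicator_of_mem (Set.mem_Ioo.mpr ⟨ht, h1⟩), hAc n]
    · rw [if_neg h1, Set.indicator_of_notMem (by simp [Set.mem_Ioo, h1]),
        measure_empty, ENNReal.zero_rpow_of_pos hq']
  have hIoo : ∫⁻ t in Set.Ioi (0:ℝ), (Set.Ioo (0:ℝ) 1).indicator (fun _ => c ^ (1/q)) t
      = c ^ (1/q) := by
    rw [lintegral_indicator measurableSet_Ioo, Measure.restrict_restrict measurableSet_Ioo,
      Set.inter_eq_left.mpr (fun y hy => hy.1), setLIntegral_const, Real.volume_Ioo]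
    simp
  have hintn : ∀ n : Fin N,
      ∫⁻ t in Set.Ioi (0:ℝ), μ {s | t < |f n s|} ^ (1/q) = c ^ (1/q) := by
    intro n
    rw [← hIoo]
    refine setLIntegral_congr_fun measurableSet_Ioi ?_
    exact fun t ht => hmeaslev n t ht
  have hsup : ∫⁻ t in Set.Ioi (0:ℝ), ⨆ n, μ {s | t < |f n s|} ^ (1/q) = c ^ (1/q) := by
    rw [← hIoo]
    refine setLIntegral_congr_fun measurableSet_Ioi ?_
    intro t ht
    beta_reduce
    rw [iSup_congr (fun n => hmeaslev n t ht), ciSup_const]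
  have hfin : ∀ n : Fin N, Measurable (f n) ∧
      ∫⁻ t in Set.Ioi (0 : ℝ), μ {s | t < |f n s|} ^ (1 / q) < ∞ := by
    intro n
    refine ⟨measurable_const.indicator (hAmeas n), ?_⟩
    rw [hintn n]
    exact ENNReal.rpow_lt_top_of_nonneg hq'.le hcT.ne
  have key := hineq N f x hfin
  rw [hsup] at key
  -- compute eLpNorm of left side
  set g : S → ℝ := fun s => Real.sqrt (radAvg fun n => f n s • x n) with hg
  have hgpt : ∀ s, (‖g s‖₊ : ℝ≥0∞) ^ q
      = ∑ m, (A m).indicator (fun _ => (‖x m‖₊ : ℝ≥0∞) ^ q) s := by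
    intro s
    by_cases hs : ∃ m, s ∈ A m
    · obtain ⟨m, hm⟩ := hs
      have h1 : ∀ n, n ≠ m → f n s • x n = 0 := by
        intro n hn
        have hns : s ∉ A n := fun h => Set.disjoint_left.mp (hAdisj hn) h hm
        simp [hf, Set.indicator_of_notMem hns]
      have hgs : g s = ‖x m‖ := by
        rw [hg]
        simp only []
        rw [radAvg_single _ m h1]
        simp [hf, Set.indicator_of_mem hm, Real.sqrt_sq (norm_nonneg _)]
      rw [Finset.sum_eq_single m
        (fun n _ hn => Set.indicator_of_notMem
          (fun h => Set.disjoint_left.mp (hAdisj hn) h hm) _) (by simp),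
        Set.indicator_of_mem hm, hgs]
      simp
    · push_neg at hs
      have h0 : (fun n => f n s • x n) = fun _ => (0 : X) := by
        funext n; simp [hf, Set.indicator_of_notMem (hs n)]
      have hgs : g s = 0 := by rw [hg]; simp only [h0, radAvg_zero, Real.sqrt_zero]
      rw [hgs]
      simp only [nnnorm_zero, ENNReal.coe_zero, ENNReal.zero_rpow_of_pos hq0]
      symm
      refine Finset.sum_eq_zero fun m _ => Set.indicator_of_notMem (hs m) _
  have help : eLpNorm g (ENNReal.ofReal q) μ
      = ((∑ m, (‖x m‖₊ : ℝ≥0∞) ^ q) * c) ^ (1/q) := by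
    rw [eLpNorm_eq_lintegral_rpow_enorm_toReal (by simp [hq0]) ENNReal.ofReal_ne_top,
      ENNReal.toReal_ofReal hq0.le]
    simp only [enorm_eq_nnnorm]
    congr 1
    rw [lintegral_congr hgpt, lintegral_finset_sum _
      (fun m _ => (measurable_const.indicator (hAmeas m)))]
    rw [Finset.sum_mul]
    refine Finset.sum_congr rfl fun m _ => ?_
    rw [lintegral_indicator (hAmeas m), setLIntegral_const, hAc m]
  rw [help] at key
  rw [ENNReal.mul_rpow_of_nonneg _ _ hq'.le] at key
  have hc1 : c ^ (1/q) ≠ 0 := by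
    simp [ENNReal.rpow_eq_zero_iff, hc0.ne', hcT.ne, hq'.ne', hq']
  have hc2 : c ^ (1/q) ≠ ∞ := (ENNReal.rpow_lt_top_of_nonneg hq'.le hcT.ne).ne
  have hrw : ENNReal.ofReal C * c ^ (1/q) * ENNReal.ofReal (Real.sqrt (radAvg x))
      = (ENNReal.ofReal C * ENNReal.ofReal (Real.sqrt (radAvg x))) * c ^ (1/q) := by ring
  rw [hrw] at key
  have key2 : (∑ m, (‖x m‖₊ : ℝ≥0∞) ^ q) ^ (1/q)
      ≤ ENNReal.ofReal C * ENNReal.ofReal (Real.sqrt (radAvg x)) :=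
    (ENNReal.mul_le_mul_iff_left hc1 hc2).mp key
  have hsum : (∑ m, (‖x m‖₊ : ℝ≥0∞) ^ q) = ENNReal.ofReal (∑ m, ‖x m‖ ^ q) := by
    rw [ENNReal.ofReal_sum_of_nonneg (fun m _ => by positivity)]
    refine Finset.sum_congr rfl fun m _ => ?_
    rw [← ENNReal.ofReal_rpow_of_nonneg (norm_nonneg _) hq0.le]
    exact congrArg (· ^ q) (ofReal_norm (x m)).symm
  rw [hsum, ENNReal.ofReal_rpow_of_nonneg (by positivity) hq'.le,
    ← ENNReal.ofReal_mul hC] at key2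
  exact (ENNReal.ofReal_le_ofReal_iff (mul_nonneg hC (Real.sqrt_nonneg _))).mp key2
end
end

section
/- Let q ∈ (2,∞), X = ℓ^q (over ℕ with counting measure), and let t : ℕ → ℝ. For each s ∈ ℕ define T(s) ∈ B(ℓ^q,ℝ) by T(s)x = t(s)x(s), and for f ∈ ℓ^{r′} define T_f x = Σ_{s∈ℕ} f(s) t(s) x(s) (whenever this sum converges absolutely for all x ∈ ℓ^q). If for some r′ ∈ [1,∞] the family {T_f : f ∈ ℓ^{r′}, ‖f‖_{ℓ^{r′}} ≤ 1} ⊆ B(ℓ^q,ℝ) is R-bounded with R-bound M, then there is a constant C (independent of t and M) such that ‖(t(i)α(i))_{i∈ℕ}‖_{ℓ²} ≤ C·M·‖α‖_{ℓ^q} for all α ∈ ℓ^q; consequently t ∈ ℓ^v where 1/v = 1/2 − 1/q. -/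
open MeasureTheory ENNReal

noncomputable section

lemma orth_sum {N : ℕ} (n m : Fin N) :
    (∑ ε : Fin N → Bool, (if ε n then (1:ℝ) else -1) * (if ε m then (1:ℝ) else -1))
      = if n = m then (2:ℝ)^N else 0 := by
  by_cases hnm : n = m
  · subst hnm
    rw [if_pos rfl]
    have h1 : ∀ ε : Fin N → Bool,
        (if ε n then (1:ℝ) else -1) * (if ε n then (1:ℝ) else -1) = 1 := by
      intro ε; cases (ε n) <;> norm_num
    simp only [h1, Finset.sum_const, Finset.card_univ]
    simp [Fintype.card_fun]
  · rw [if_neg hnm]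
    apply Finset.sum_ninvolution (g := fun ε => Function.update ε n (!ε n))
    · intro ε
      have h1 : Function.update ε n (!ε n) n = !ε n := Function.update_self _ _ _
      have h2 : Function.update ε n (!ε n) m = ε m :=
        Function.update_of_ne (Ne.symm hnm) _ _
      rw [h1, h2]
      cases (ε n) <;> cases (ε m) <;> norm_num
    · intro ε _ h
      have := congrFun h n
      rw [Function.update_self] at this
      exact (Bool.not_ne_self (ε n)) this
    · intro ε; exact Finset.mem_univ _
    · intro ε
      funext i
      by_cases hi : i = n
      · subst hi; simp [Function.update_self]
      · simp [Function.update_of_ne hi]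

lemma radAvg_scalar {N : ℕ} (a : Fin N → ℝ) : radAvg a = ∑ n, (a n)^2 := by
  have key : ∑ ε : Fin N → Bool, ‖∑ n, (if ε n then (1:ℝ) else -1) • a n‖ ^ 2
      = 2^N * ∑ n, (a n)^2 := by
    have h : ∀ ε : Fin N → Bool, ‖∑ n, (if ε n then (1:ℝ) else -1) • a n‖ ^ 2
        = ∑ n, ∑ m, ((if ε n then (1:ℝ) else -1) * (if ε m then (1:ℝ) else -1))
            * (a n * a m) := by
      intro ε
      rw [Real.norm_eq_abs, sq_abs, pow_two, Finset.sum_mul_sum]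
      refine Finset.sum_congr rfl fun n _ => Finset.sum_congr rfl fun m _ => ?_
      simp only [smul_eq_mul]; ring
    simp_rw [h]
    rw [Finset.sum_comm]
    have h2 : ∀ n : Fin N,
        (∑ ε : Fin N → Bool, ∑ m, ((if ε n then (1:ℝ) else -1) * (if ε m then (1:ℝ) else -1))
            * (a n * a m)) = 2^N * (a n)^2 := by
      intro n
      rw [Finset.sum_comm]
      have h3 : ∀ m : Fin N,
          (∑ ε : Fin N → Bool, ((if ε n then (1:ℝ) else -1) * (if ε m then (1:ℝ) else -1))
              * (a n * a m)) = (if n = m then (2:ℝ)^N else 0) * (a n * a m) := by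
        intro m
        rw [← Finset.sum_mul, orth_sum]
      simp_rw [h3]
      simp only [ite_mul, zero_mul]
      rw [Finset.sum_ite_eq, if_pos (Finset.mem_univ n)]
      ring
    simp_rw [h2]
    rw [← Finset.mul_sum]
  rw [radAvg, key]
  rw [mul_div_assoc, mul_comm, div_mul_cancel₀ _ (by positivity : (2:ℝ)^N ≠ 0)]

lemma norm_sum_single_le {q : ℝ≥0∞} [Fact (1 ≤ q)] (hq : 0 < q.toReal)
    (α : lp (fun _ : ℕ => ℝ) q) (g : ℕ → ℝ) (hg : ∀ i, |g i| ≤ |α i|) (s : Finset ℕ) :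
    ‖∑ i ∈ s, lp.single q i (g i)‖ ≤ ‖α‖ := by
  rw [← Real.rpow_le_rpow_iff (norm_nonneg _) (norm_nonneg _) hq]
  calc ‖∑ i ∈ s, lp.single q i (g i)‖ ^ q.toReal
      = ∑ i ∈ s, ‖g i‖ ^ q.toReal := lp.norm_sum_single hq g s
    _ ≤ ∑ i ∈ s, ‖α i‖ ^ q.toReal := Finset.sum_le_sum fun i _ =>
        Real.rpow_le_rpow (norm_nonneg _) (by simpa [Real.norm_eq_abs] using hg i) hq.le
    _ ≤ ‖α‖ ^ q.toReal := lp.sum_rpow_le_norm_rpow hq α s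

lemma sqrt_radAvg_single_le {q : ℝ≥0∞} [Fact (1 ≤ q)] (hq : 0 < q.toReal)
    (α : lp (fun _ : ℕ => ℝ) q) (N : ℕ)
    (x : Fin N → lp (fun _ : ℕ => ℝ) q)
    (hx : ∀ n : Fin N, x n = lp.single q (n:ℕ) (α n)) :
    Real.sqrt (radAvg x) ≤ ‖α‖ := by
  have hε : ∀ ε : Fin N → Bool,
      ‖∑ n : Fin N, (if ε n then (1:ℝ) else -1) • x n‖ ≤ ‖α‖ := by
    intro ε
    set g : ℕ → ℝ :=
      fun i => if h : i < N then (if ε ⟨i,h⟩ then (1:ℝ) else -1) * α i else 0 with hgdef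
    have h1 : ∀ n : Fin N, (if ε n then (1:ℝ) else -1) • x n
        = lp.single q (n:ℕ) (g n) := by
      intro n
      have hgn : g n = (if ε n then (1:ℝ) else -1) * α n := by
        simp only [hgdef]
        rw [dif_pos n.isLt]
      rw [hx n, hgn, ← smul_eq_mul, lp.single_smul]
    rw [Finset.sum_congr rfl (fun n _ => h1 n),
      Fin.sum_univ_eq_sum_range (fun i => lp.single q i (g i)) N]
    apply norm_sum_single_le hq α g ?_ (Finset.range N)
    intro i
    simp only [hgdef]
    by_cases h : i < N
    · rw [dif_pos h, abs_mul]
      cases (ε ⟨i, h⟩) <;> simp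
    · rw [dif_neg h]
      simp [abs_nonneg]
  have h2 : radAvg x ≤ ‖α‖^2 := by
    rw [radAvg, div_le_iff₀ (by positivity)]
    calc ∑ ε : Fin N → Bool,
          ‖∑ n : Fin N, (if ε n then (1:ℝ) else -1) • x n‖ ^ 2
        ≤ ∑ _ε : Fin N → Bool, ‖α‖^2 :=
          Finset.sum_le_sum fun ε _ => pow_le_pow_left₀ (norm_nonneg _) (hε ε) 2
      _ = ‖α‖^2 * 2^N := by
          simp [Finset.sum_const, Finset.card_univ, Fintype.card_fun, mul_comm]
  calc Real.sqrt (radAvg x)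
      ≤ Real.sqrt (‖α‖^2) := Real.sqrt_le_sqrt h2
    _ = ‖α‖ := Real.sqrt_sq (norm_nonneg _)


/-- The Example after Remark 4.4: for `X = ℓ^q`, `q ∈ (2,∞)`, `Y = ℝ`, and the diagonal
operators `T(s)x = t(s)x(s)`, `R`-boundedness of `{T_f : ‖f‖_{ℓ^{r'}} ≤ 1}` with `R`-bound `M`
forces `‖(t·α)‖_{ℓ²} ≤ C M ‖α‖_{ℓ^q}` for all `α ∈ ℓ^q`; consequently `t ∈ ℓ^v`,
`1/v = 1/2 - 1/q`. -/
theorem statement10 (q v : ℝ≥0∞) [Fact (1 ≤ q)] (hq₂ : 2 < q) (hqtop : q ≠ ∞)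
    (hv : 1 / v = 1 / 2 - 1 / q) :
    ∃ C : ℝ, 0 ≤ C ∧ ∀ (t : ℕ → ℝ) (r' : ℝ≥0∞) [Fact (1 ≤ r')] (M : ℝ), 0 ≤ M →
      (∀ (f : lp (fun _ : ℕ => ℝ) r') (x : lp (fun _ : ℕ => ℝ) q),
        Summable fun s => f s * t s * x s) →
      (∀ (N : ℕ) (f : Fin N → lp (fun _ : ℕ => ℝ) r') (x : Fin N → lp (fun _ : ℕ => ℝ) q),
        (∀ n, ‖f n‖ ≤ 1) →
        Real.sqrt (radAvg fun n => ∑' s, f n s * t s * x n s) ≤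
          M * Real.sqrt (radAvg x)) →
      (∀ α : lp (fun _ : ℕ => ℝ) q,
        (∑' i, ENNReal.ofReal ((t i * α i) ^ 2)) ^ ((1 : ℝ) / 2) ≤
          ENNReal.ofReal (C * M * ‖α‖)) ∧
      Memℓp t v := by
  refine ⟨1, zero_le_one, ?_⟩
  intro t r' _ M hM _hsum h2
  have hqr2 : 2 < q.toReal := by
    have h := (ENNReal.toReal_lt_toReal (by norm_num) hqtop).mpr hq₂
    simpa using h
  have hqr0 : 0 < q.toReal := by linarith
  have hqrne : q.toReal ≠ 0 := ne_of_gt hqr0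
  have key : ∀ (α : lp (fun _ : ℕ => ℝ) q) (N : ℕ),
      ∑ n : Fin N, (t n * α n)^2 ≤ (M * ‖α‖)^2 := by
    intro α N
    set f : Fin N → lp (fun _ : ℕ => ℝ) r' := fun n => lp.single r' (n:ℕ) 1 with hfdef
    set x : Fin N → lp (fun _ : ℕ => ℝ) q := fun n => lp.single q (n:ℕ) (α n) with hxdef
    have hf : ∀ n, ‖f n‖ ≤ 1 := by
      intro n
      by_cases hr : r' = ∞
      · subst hr
        rw [hfdef, lp.norm_eq_ciSup]
        apply Real.iSup_le _ zero_le_one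
        intro i
        by_cases hi : i = (n:ℕ)
        · subst hi; rw [lp.single_apply_self]; simp
        · rw [lp.single_apply_ne _ _ _ hi]; simp
      · have hr1 : (1:ℝ≥0∞) ≤ r' := Fact.out
        have hr0 : 0 < r'.toReal := ENNReal.toReal_pos (by
          intro h0; rw [h0] at hr1; simp at hr1) hr
        have hns := lp.norm_single (E := fun _ : ℕ => ℝ) (zero_lt_one.trans_le hr1) (n:ℕ) (1:ℝ)
        simp only [hfdef]
        rw [hns]
        simp
    have hts : (fun n : Fin N => ∑' s, f n s * t s * x n s) = fun n : Fin N => t (n:ℕ) * α (n:ℕ) := by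
      funext n
      rw [tsum_eq_single (n:ℕ)]
      · simp only [hfdef, hxdef]
        rw [lp.single_apply_self, lp.single_apply_self]
        ring
      · intro s hs
        simp only [hfdef]
        rw [lp.single_apply_ne _ _ _ hs]
        ring
    have h := h2 N f x hf
    rw [hts, radAvg_scalar] at h
    have hx2 : Real.sqrt (radAvg x) ≤ ‖α‖ :=
      sqrt_radAvg_single_le hqr0 α N x (fun n => rfl)
    have hfin : Real.sqrt (∑ n : Fin N, (t n * α n)^2) ≤ M * ‖α‖ :=
      h.trans (mul_le_mul_of_nonneg_left hx2 hM)
    have hnn : 0 ≤ ∑ n : Fin N, (t n * α n)^2 :=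
      Finset.sum_nonneg fun _ _ => sq_nonneg _
    calc ∑ n : Fin N, (t n * α n)^2
        = Real.sqrt (∑ n : Fin N, (t n * α n)^2) ^ 2 := (Real.sq_sqrt hnn).symm
      _ ≤ (M * ‖α‖)^2 := pow_le_pow_left₀ (Real.sqrt_nonneg _) hfin 2
  constructor
  · intro α
    have hMα : 0 ≤ M * ‖α‖ := mul_nonneg hM (norm_nonneg _)
    have h1 : (∑' i, ENNReal.ofReal ((t i * α i)^2)) ≤ ENNReal.ofReal ((M * ‖α‖)^2) := by
      rw [ENNReal.tsum_eq_iSup_sum]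
      apply iSup_le
      intro s
      rw [← ENNReal.ofReal_sum_of_nonneg (fun i _ => sq_nonneg _)]
      apply ENNReal.ofReal_le_ofReal
      obtain ⟨N, hN⟩ := s.exists_nat_subset_range
      calc ∑ i ∈ s, (t i * α i)^2
          ≤ ∑ i ∈ Finset.range N, (t i * α i)^2 :=
            Finset.sum_le_sum_of_subset_of_nonneg hN (fun _ _ _ => sq_nonneg _)
        _ = ∑ n : Fin N, (t n * α n)^2 :=
            (Fin.sum_univ_eq_sum_range (fun i => (t i * α i)^2) N).symm
        _ ≤ (M * ‖α‖)^2 := key α N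
    calc (∑' i, ENNReal.ofReal ((t i * α i)^2)) ^ ((1:ℝ)/2)
        ≤ (ENNReal.ofReal ((M * ‖α‖)^2)) ^ ((1:ℝ)/2) :=
          ENNReal.rpow_le_rpow h1 (by norm_num)
      _ = ENNReal.ofReal (((M * ‖α‖)^2) ^ ((1:ℝ)/2)) := by
          rw [← ENNReal.ofReal_rpow_of_nonneg (sq_nonneg _) (by norm_num)]
      _ = ENNReal.ofReal (1 * M * ‖α‖) := by
          congr 1
          rw [← Real.rpow_natCast (M * ‖α‖) 2, ← Real.rpow_mul hMα]
          norm_num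
  · -- Memℓp t v
    have hq2' : (1:ℝ≥0∞)/q < 1/2 := by
      rw [one_div, one_div]
      exact ENNReal.inv_lt_inv.mpr hq₂
    have hvne : 1/v ≠ 0 := by
      rw [hv]
      exact (tsub_pos_of_lt hq2').ne'
    have hvtop : v ≠ ∞ := by
      intro h; rw [h] at hvne; simp at hvne
    have hvr : v.toReal⁻¹ = 2⁻¹ - q.toReal⁻¹ := by
      have h := congrArg ENNReal.toReal hv
      rw [one_div, one_div, one_div,
        ENNReal.toReal_sub_of_le (by rw [← one_div, ← one_div]; exact hq2'.le) (by simp)] at h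
      simpa [ENNReal.toReal_inv] using h
    have hinv : q.toReal⁻¹ < 2⁻¹ := by
      rw [← one_div, ← one_div]
      exact one_div_lt_one_div_of_lt (by norm_num) hqr2
    have hvinvpos : 0 < v.toReal⁻¹ := by rw [hvr]; norm_num; linarith
    have hvrpos : 0 < v.toReal := inv_pos.mp hvinvpos
    have hvrne : v.toReal ≠ 0 := ne_of_gt hvrpos
    have hA : 2 + v.toReal/q.toReal * 2 = v.toReal := by
      field_simp at hvr
      field_simp
      linarith
    have hB : (1:ℝ) - 2/q.toReal = 2/v.toReal := by
      field_simp at hvr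
      field_simp
      linarith
    have hpt : ∀ y : ℝ, (y * (|y| ^ (v.toReal/q.toReal)))^2 = |y|^v.toReal := by
      intro y
      rw [mul_pow, ← sq_abs y,
        ← Real.rpow_natCast |y| 2, ← Real.rpow_natCast (|y| ^ (v.toReal/q.toReal)) 2,
        ← Real.rpow_mul (abs_nonneg y),
        ← Real.rpow_add' (abs_nonneg y) (by push_cast; rw [hA]; exact hvrne)]
      push_cast
      rw [hA]
    refine memℓp_gen' (C := M ^ v.toReal) ?_
    intro s
    have hSnn : 0 ≤ ∑ i ∈ s, ‖t i‖ ^ v.toReal :=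
      Finset.sum_nonneg fun i _ => Real.rpow_nonneg (norm_nonneg _) _
    set S := ∑ i ∈ s, ‖t i‖ ^ v.toReal with hSdef
    set c : ℕ → ℝ := fun i => |t i| ^ (v.toReal/q.toReal) with hcdef
    set β : lp (fun _ : ℕ => ℝ) q := ∑ i ∈ s, lp.single q i (c i) with hβdef
    have hβap : ∀ j, β j = if j ∈ s then c j else 0 := by
      intro j
      rw [hβdef]
      rw [lp.coeFn_sum, Finset.sum_apply]
      simp [Pi.single_apply]
    have hβnorm : ‖β‖ ^ q.toReal = S := by
      rw [hβdef, lp.norm_sum_single hqr0 c s, hSdef]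
      refine Finset.sum_congr rfl fun i _ => ?_
      rw [Real.norm_eq_abs, Real.norm_eq_abs, hcdef,
        abs_of_nonneg (Real.rpow_nonneg (abs_nonneg _) _),
        ← Real.rpow_mul (abs_nonneg _), div_mul_cancel₀ _ hqrne]
    have hβn : ‖β‖ = S ^ q.toReal⁻¹ := by
      rw [← hβnorm, ← Real.rpow_mul (norm_nonneg _), mul_inv_cancel₀ hqrne, Real.rpow_one]
    obtain ⟨N, hN⟩ := s.exists_nat_subset_range
    have hsum1 : S ≤ ∑ n : Fin N, (t n * β n)^2 := by
      have e1 : S = ∑ i ∈ s, (t i * β i)^2 := by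
        refine Finset.sum_congr rfl fun i hi => ?_
        rw [hβap i, if_pos hi, hcdef, hpt, Real.norm_eq_abs]
      rw [e1]
      calc ∑ i ∈ s, (t i * β i)^2
          ≤ ∑ i ∈ Finset.range N, (t i * β i)^2 :=
            Finset.sum_le_sum_of_subset_of_nonneg hN (fun _ _ _ => sq_nonneg _)
        _ = ∑ n : Fin N, (t n * β n)^2 :=
            (Fin.sum_univ_eq_sum_range (fun i => (t i * β i)^2) N).symm
    have h5 : S ≤ M^2 * S^((2:ℝ)/q.toReal) := by
      have h := hsum1.trans (key β N)
      rw [hβn, mul_pow] at h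
      have hq2r : (S^(q.toReal⁻¹))^2 = S^((2:ℝ)/q.toReal) := by
        rw [← Real.rpow_natCast (S^(q.toReal⁻¹)) 2, ← Real.rpow_mul hSnn]
        congr 1
        push_cast
        field_simp
      rwa [hq2r] at h
    rcases eq_or_lt_of_le hSnn with h0 | hpos
    · rw [← h0]
      exact Real.rpow_nonneg hM _
    · have h6 : S ^ ((2:ℝ)/v.toReal) ≤ M^2 := by
        rw [← hB, Real.rpow_sub hpos, Real.rpow_one,
          div_le_iff₀ (Real.rpow_pos_of_pos hpos _)]
        exact h5
      have h7 := Real.rpow_le_rpow (Real.rpow_nonneg hSnn _) h6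
        (le_of_lt (by positivity : (0:ℝ) < v.toReal/2))
      rw [← Real.rpow_mul hSnn, ← Real.rpow_natCast M 2, ← Real.rpow_mul hM] at h7
      have e2 : (2:ℝ)/v.toReal * (v.toReal/2) = 1 := by field_simp
      have e3 : ((2:ℕ):ℝ) * (v.toReal/2) = v.toReal := by push_cast; ring
      rwa [e2, Real.rpow_one, e3] at h7
end
end
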